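/- For every natural number n ≥ 5, setting k = ⌈log_2 n⌉ − 2 and η = 5/2 − 55/(6e^2), it holds that sum_{i=1}^{n} [ i·2^{−k}·(1 − 2^{−k})^{i−1} + (1 − 2^{−k})^i − (1 − 2^{−(k−1)})^i − i·2^{−k}·(1 − 2^{−(k−1)})^{i−1} ] ≥ η·2^{k−1}. -/

import Mathlib

/-!
With `p = 2 ^ (-k)` the sum has the closed form
`4p · α = 5 - 4(1 - p)ⁿ(2 + (n - 1)p) + (1 - 2p)ⁿ(3 + (2n - 4)p)`.
The choice of `k` gives `p ≤ 1/2` and `np ≥ 2`, so the last term is nonnegative, and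
`(1 - p)ⁿ(2 + (n - 1)p) ≤ e^{-np}(2 + np) ≤ 4e^{-2}`. As `2^(k-1) = 1/(2p)`, this yields
`α ≥ (5 - 16e^{-2})/(4p) ≥ η · 2^(k-1)`, the last step being `48 ≤ 55`.
-/

open Finset Real

/-- `alphaSum (2 ^ (-k)) n` is the paper's `α(k, n)`. -/
def alphaSum {R : Type*} [CommRing R] (p : R) (n : ℕ) : R :=
  ∑ i ∈ Icc 1 n, ((i : R) * p * (1 - p) ^ (i - 1) + (1 - p) ^ i
    - (1 - 2 * p) ^ i - (i : R) * p * (1 - 2 * p) ^ (i - 1))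

theorem four_mul_mul_alphaSum {R : Type*} [CommRing R] (p : R) (n : ℕ) :
    4 * p * alphaSum p n
      = 5 - 4 * (1 - p) ^ n * (2 + (n - 1) * p) + (1 - 2 * p) ^ n * (3 + (2 * n - 4) * p) := by
  induction n with
  | zero =>
    rw [alphaSum, Icc_eq_empty_of_lt zero_lt_one, sum_empty]
    push_cast
    ring
  | succ m ih =>
    rw [alphaSum, sum_Icc_succ_top (Nat.le_add_left 1 m), mul_add, ← alphaSum, ih,
      Nat.add_sub_cancel]
    push_cast
    ring

theorem exp_neg_mul_two_add_le {t : ℝ} (ht : 2 ≤ t) : exp (-t) * (2 + t) ≤ 4 * exp (-2) := by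
  have hlin : 2 + t ≤ 4 * exp (t - 2) := by linarith [add_one_le_exp (t - 2)]
  calc exp (-t) * (2 + t) ≤ exp (-t) * (4 * exp (t - 2)) := by gcongr
    _ = 4 * exp (-2) := by rw [mul_left_comm, ← exp_add]; ring_nf

theorem one_sub_pow_mul_le {p : ℝ} {n : ℕ} (hp0 : 0 ≤ p) (hp1 : p ≤ 1) (hnp : 2 ≤ n * p) :
    (1 - p) ^ n * (2 + (n - 1) * p) ≤ 4 * exp (-2) := by
  have hpow : (1 - p) ^ n ≤ exp (-(n * p)) := by
    calc (1 - p) ^ n ≤ exp (-p) ^ n := pow_le_pow_left₀ (sub_nonneg.2 hp1) (one_sub_le_exp_neg p) n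
      _ = exp (-(n * p)) := by rw [← exp_nat_mul]; ring_nf
  calc (1 - p) ^ n * (2 + (n - 1) * p) ≤ exp (-(n * p)) * (2 + n * p) := by
        gcongr
        · nlinarith
        · linarith
    _ ≤ 4 * exp (-2) := exp_neg_mul_two_add_le hnp

theorem le_alphaSum {p : ℝ} {n : ℕ} (hp0 : 0 < p) (hp : p ≤ 1 / 2) (hnp : 2 ≤ n * p) :
    (5 - 16 * exp (-2)) / (4 * p) ≤ alphaSum p n := by
  rw [div_le_iff₀' (by positivity), four_mul_mul_alphaSum]
  have hsingle := one_sub_pow_mul_le hp0.le (by linarith) hnp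
  have hdouble : 0 ≤ (1 - 2 * p) ^ n * (3 + (2 * n - 4) * p) :=
    mul_nonneg (pow_nonneg (by linarith) n) (by nlinarith)
  linarith

theorem zpow_lt_iff_lt_ceil_logb {b r : ℝ} (hb : 1 < b) (hr : 0 < r) (m : ℤ) :
    b ^ m < r ↔ m < ⌈logb b r⌉ := by
  rw [Int.lt_ceil, lt_logb_iff_rpow_lt hb hr, rpow_intCast]

/-- For every `n ≥ 5`, with `k = ⌈log₂ n⌉ - 2` and
`η = 5/2 - 55/(6e²)`, it holds that `α(k,n) ≥ η·2^{k-1}`. -/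
theorem alpha_k_ge (n : ℕ) (hn : 5 ≤ n) (k : ℤ) (η : ℝ)
    (hk : k = ⌈Real.logb 2 n⌉ - 2)
    (hη : η = 5 / 2 - 55 / (6 * Real.exp 1 ^ 2)) :
    ∑ i ∈ Finset.Icc 1 n,
        ((i : ℝ) * (2 : ℝ) ^ (-k) * (1 - (2 : ℝ) ^ (-k)) ^ (i - 1)
          + (1 - (2 : ℝ) ^ (-k)) ^ i
          - (1 - (2 : ℝ) ^ (-k + 1)) ^ i
          - (i : ℝ) * (2 : ℝ) ^ (-k) * (1 - (2 : ℝ) ^ (-k + 1)) ^ (i - 1))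
      ≥ η * (2 : ℝ) ^ (k - 1) := by
  have hn0 : (0 : ℝ) < n := Nat.cast_pos.2 (by omega)
  have hk1 : 1 ≤ k := by
    have := (zpow_lt_iff_lt_ceil_logb one_lt_two hn0 2).1 (by norm_num; exact_mod_cast hn)
    omega
  have hkn : (2 : ℝ) ^ (k + 1) < n := (zpow_lt_iff_lt_ceil_logb one_lt_two hn0 _).2 (by omega)
  set p : ℝ := 2 ^ (-k) with hp
  have hp0 : 0 < p := by positivity
  have hp_half : p ≤ 1 / 2 := by
    calc p ≤ 2 ^ (-1 : ℤ) := zpow_le_zpow_right₀ (by norm_num) (by omega)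
      _ = 1 / 2 := by norm_num
  have hnp : 2 ≤ n * p := by
    calc (2 : ℝ) = 2 ^ (k + 1) * p := by rw [hp, ← zpow_add₀ two_ne_zero]; norm_num
      _ ≤ n * p := by gcongr
  have hscale : (2 : ℝ) ^ (k - 1) = 2 / (4 * p) := by
    rw [eq_div_iff (by positivity), hp, show (4 : ℝ) = 2 ^ (2 : ℤ) by norm_num,
      ← zpow_add₀ two_ne_zero, ← zpow_add₀ two_ne_zero, show k - 1 + (2 + -k) = 1 by ring, zpow_one]
  have he : exp (-2) = (exp 1 ^ 2)⁻¹ := by rw [exp_neg, ← exp_nat_mul]; norm_num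
  have h2p : (2 : ℝ) ^ (-k + 1) = 2 * p := by rw [zpow_add_one₀ two_ne_zero, mul_comm]
  calc η * 2 ^ (k - 1) = (5 - 55 / (3 * exp 1 ^ 2)) / (4 * p) := by
        rw [hscale, hη]; field_simp; ring
    _ ≤ (5 - 16 * exp (-2)) / (4 * p) := by
        gcongr
        rw [he]; field_simp; norm_num
    _ ≤ alphaSum p n := le_alphaSum hp0 hp_half hnp
    _ = _ := by simp only [alphaSum, h2p]
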